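/- For every MRDT implementation D, every reachable configuration C = (N,H,L,G,vis), and all versions v₁, v₂ ∈ dom(N): the union of L(v⊤) over all potential LCAs v⊤ of v₁ and v₂ in G equals L(v₁) ∩ L(v₂). -/

import Mathlib

/-- An MRDT implementation `D = (Σ, σ₀, do, merge, rc)`. -/
structure MRDT (T R O : Type) where
  State : Type
  init : State
  doOp : State → T → R → O → State
  merge : State → State → State → State
  rc : O → O → Prop

/-- An event is a triple `(t, r, o)`. -/
abbrev Event (T R O : Type) := T × R × O

variable {T R O : Type}

/-- Applying an event to a state: `e(σ) = do σ t r o`. -/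
def MRDT.applyEvent (D : MRDT T R O) (e : Event T R O) (σ : D.State) : D.State :=
  D.doOp σ e.1 e.2.1 e.2.2

/-- Applying a finite sequence of events to a state. -/
def MRDT.applySeq (D : MRDT T R O) (π : List (Event T R O)) (σ : D.State) : D.State :=
  π.foldl (fun s e => D.applyEvent e s) σ

/-- A configuration `C = (N, H, L, G, vis)`; versions are natural numbers. -/
structure Config (T R O S : Type) where
  N : ℕ → Option S
  H : R → Option ℕ
  L : ℕ → Finset (Event T R O)
  E : ℕ → ℕ → Prop
  vis : Event T R O → Event T R O → Prop

/-- `E_C`: the set of events appearing at some version of `C`. -/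
def Config.events {S : Type} (C : Config T R O S) : Set (Event T R O) :=
  {e | ∃ v, (C.N v).isSome ∧ e ∈ C.L v}

/-- `vt` is a lowest common ancestor of `v1` and `v2` in the graph with
vertex set `V` and edge relation `E`. -/
def isLCA (V : ℕ → Prop) (E : ℕ → ℕ → Prop) (v1 v2 vt : ℕ) : Prop :=
  V vt ∧ Relation.ReflTransGen E vt v1 ∧ Relation.ReflTransGen E vt v2 ∧
    ∀ v, V v → Relation.ReflTransGen E v v1 → Relation.ReflTransGen E v v2 →
      Relation.ReflTransGen E v vt

variable [DecidableEq T] [DecidableEq R] [DecidableEq O]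

/-- Result of a `CreateBranch` transition. -/
def branchConfig (D : MRDT T R O) (C : Config T R O D.State)
    (r' : R) (vr v : ℕ) (σ : D.State) : Config T R O D.State where
  N := Function.update C.N v (some σ)
  H := Function.update C.H r' (some v)
  L := Function.update C.L v (C.L vr)
  E := fun u w => C.E u w ∨ (u = vr ∧ w = v)
  vis := C.vis

/-- Result of an `Apply` transition. -/
def applyConfig (D : MRDT T R O) (C : Config T R O D.State)
    (t : T) (r : R) (o : O) (vr v : ℕ) (σ : D.State) : Config T R O D.State where
  N := Function.update C.N v (some (D.applyEvent (t, r, o) σ))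
  H := Function.update C.H r (some v)
  L := Function.update C.L v (insert (t, r, o) (C.L vr))
  E := fun u w => C.E u w ∨ (u = vr ∧ w = v)
  vis := fun e1 e2 => C.vis e1 e2 ∨ (e1 ∈ C.L vr ∧ e2 = (t, r, o))

/-- Result of a `Merge` transition. -/
def mergeConfig (D : MRDT T R O) (C : Config T R O D.State)
    (r1 : R) (v1 v2 vt v : ℕ) (σt σ1 σ2 : D.State) : Config T R O D.State where
  N := Function.update C.N v (some (D.merge σt σ1 σ2))
  H := Function.update C.H r1 (some v)
  L := Function.update C.L v (C.L v1 ∪ C.L v2)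
  E := fun u w => C.E u w ∨ ((u = v1 ∨ u = v2) ∧ w = v)
  vis := C.vis

/-- The transition relation of the replicated datastore. -/
inductive Step (D : MRDT T R O) : Config T R O D.State → Config T R O D.State → Prop
  | createBranch (C : Config T R O D.State) (r r' : R) (vr v : ℕ) (σ : D.State)
      (hr : C.H r = some vr) (hσ : C.N vr = some σ)
      (hr' : C.H r' = none) (hv : C.N v = none) :
      Step D C (branchConfig D C r' vr v σ)
  | applyOp (C : Config T R O D.State) (t : T) (r : R) (o : O) (vr v : ℕ) (σ : D.State)
      (hr : C.H r = some vr) (hσ : C.N vr = some σ) (hv : C.N v = none)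
      (ht : ∀ e' ∈ C.events, e'.1 ≠ t) :
      Step D C (applyConfig D C t r o vr v σ)
  | mergeOp (C : Config T R O D.State) (r1 r2 : R) (v1 v2 vt v : ℕ) (σ1 σ2 σt : D.State)
      (h1 : C.H r1 = some v1) (h2 : C.H r2 = some v2)
      (hσ1 : C.N v1 = some σ1) (hσ2 : C.N v2 = some σ2) (hσt : C.N vt = some σt)
      (hlca : isLCA (fun u => (C.N u).isSome) C.E v1 v2 vt)
      (hv : C.N v = none) :
      Step D C (mergeConfig D C r1 v1 v2 vt v σt σ1 σ2)
  | queryOp (C : Config T R O D.State) : Step D C C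

/-- The initial configuration, with a single replica `r0` and head version `0`. -/
def initConfig (D : MRDT T R O) (r0 : R) : Config T R O D.State where
  N := fun u => if u = 0 then some D.init else none
  H := fun r => if r = r0 then some 0 else none
  L := fun _ => ∅
  E := fun _ _ => False
  vis := fun _ _ => False

/-- A configuration is reachable if obtained from the initial configuration
by a finite sequence of transitions. -/
def Reachable (D : MRDT T R O) (C : Config T R O D.State) : Prop :=
  ∃ r0 : R, Relation.ReflTransGen (Step D) (initConfig D r0) C

/-- Events `e, e'` commute: `e(e'(σ)) = e'(e(σ))` for all states. -/
def MRDT.Commute (D : MRDT T R O) (e e' : Event T R O) : Prop :=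
  ∀ σ : D.State, D.applyEvent e (D.applyEvent e' σ) = D.applyEvent e' (D.applyEvent e σ)

/-- The linearization relation `lo_C` on `E_C`. -/
def lo (D : MRDT T R O) (C : Config T R O D.State) (e1 e2 : Event T R O) : Prop :=
  e1 ∈ C.events ∧ e2 ∈ C.events ∧
    ((C.vis e1 e2 ∧ ¬ D.Commute e1 e2) ∨
     (¬ C.vis e1 e2 ∧ ¬ C.vis e2 e1 ∧ D.rc e1.2.2 e2.2.2 ∧
       ¬ ∃ e3, e3 ∈ C.events ∧ C.vis e2 e3 ∧ ¬ D.Commute e2 e3))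

/-- `e` occurs strictly before `e'` in the list `π`. -/
def precedes (π : List (Event T R O)) (e e' : Event T R O) : Prop :=
  ∃ i j : ℕ, i < j ∧ π[i]? = some e ∧ π[j]? = some e'

/-- A configuration is RA-linearizable. -/
def RALinConfig (D : MRDT T R O) (C : Config T R O D.State) : Prop :=
  ∀ r vr, C.H r = some vr →
    ∃ π : List (Event T R O), π.Nodup ∧ (∀ e, e ∈ π ↔ e ∈ C.L vr) ∧
      (∀ e e', e ∈ C.L vr → e' ∈ C.L vr → lo D C e e' → precedes π e e') ∧
      C.N vr = some (D.applySeq π D.init)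

/-- `rc-non-comm`. -/
def RcNonComm (D : MRDT T R O) : Prop :=
  ∀ o1 o2 : O,
    (∃ e1 e2 : Event T R O, e1.2.2 = o1 ∧ e2.2.2 = o2 ∧ ¬ D.Commute e1 e2) ↔
      (D.rc o1 o2 ∨ D.rc o2 o1)

/-- `cond-comm`. -/
def CondComm (D : MRDT T R O) : Prop :=
  ∀ o1 o2 o3 : O, D.rc o1 o2 →
    (∃ e2 e3 : Event T R O, e2.2.2 = o2 ∧ e3.2.2 = o3 ∧ ¬ D.Commute e2 e3) →
    ∀ e1 e2 e3 : Event T R O, e1.2.2 = o1 → e2.2.2 = o2 → e3.2.2 = o3 →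
      ∀ (σ : D.State) (π : List (Event T R O)),
        D.applyEvent e3 (D.applySeq π (D.applyEvent e1 (D.applyEvent e2 σ))) =
          D.applyEvent e3 (D.applySeq π (D.applyEvent e2 (D.applyEvent e1 σ)))

/-- `no-rc-chain`. -/
def NoRcChain (D : MRDT T R O) : Prop :=
  ¬ ∃ o1 o2 o3 : O, D.rc o1 o2 ∧ D.rc o2 o3

/-- A list of events has pairwise distinct timestamps. -/
def Distinct (l : List (Event T R O)) : Prop :=
  l.Pairwise (fun e e' => e.1 ≠ e'.1)

/-- `vt` is a potential LCA of `v1` and `v2` in the graph with vertex set `V`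
and edge relation `E`. -/
def isPotentialLCA (V : ℕ → Prop) (E : ℕ → ℕ → Prop) (v1 v2 vt : ℕ) : Prop :=
  V vt ∧ Relation.ReflTransGen E vt v1 ∧ Relation.ReflTransGen E vt v2 ∧
    ¬ ∃ v, V v ∧ v ≠ vt ∧ Relation.ReflTransGen E v v1 ∧
      Relation.ReflTransGen E v v2 ∧ Relation.ReflTransGen E vt v

section AuxProof

open Relation

variable {T R O : Type} [DecidableEq T] [DecidableEq R] [DecidableEq O]

/-- The invariant on configurations used to prove the theorem. -/
def InvC (D : MRDT T R O) (C : Config T R O D.State) : Prop :=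
  (setOf fun u => (C.N u).isSome).Finite ∧
  (∀ u w, C.E u w → (C.N u).isSome ∧ (C.N w).isSome) ∧
  (∀ u w, C.E u w → C.L u ⊆ C.L w) ∧
  (∀ u w, C.E u w → ¬ ReflTransGen C.E w u) ∧
  (∀ e w1 w2, (C.N w1).isSome → (C.N w2).isSome → e ∈ C.L w1 → e ∈ C.L w2 →
    ∃ u, (C.N u).isSome ∧ ReflTransGen C.E u w1 ∧ ReflTransGen C.E u w2 ∧ e ∈ C.L u)

omit [DecidableEq T] [DecidableEq R] [DecidableEq O] in
lemma mono_rtg {D : MRDT T R O} {C : Config T R O D.State}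
    (hmono : ∀ u w, C.E u w → C.L u ⊆ C.L w) {a b : ℕ}
    (h : ReflTransGen C.E a b) : C.L a ⊆ C.L b := by
  induction h with
  | refl => exact fun _ hx => hx
  | tail _ hcb ih => exact fun x hx => hmono _ _ hcb (ih hx)

lemma rtg_antisymm {E : ℕ → ℕ → Prop} (hacyc : ∀ u w, E u w → ¬ ReflTransGen E w u)
    {a b : ℕ} (h1 : ReflTransGen E a b) (h2 : ReflTransGen E b a) : a = b := by
  rcases h1.cases_head with rfl | ⟨c, hac, hcb⟩
  · rfl
  · exact absurd (hcb.trans h2) (hacyc _ _ hac)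

lemma rtg_avoid {E : ℕ → ℕ → Prop} {srcs : ℕ → Prop} {v : ℕ}
    (hdom : ∀ a b, E a b → a ≠ v) {a b : ℕ}
    (h : ReflTransGen (fun u w => E u w ∨ (srcs u ∧ w = v)) a b) :
    b ≠ v → ReflTransGen E a b := by
  induction h with
  | refl => exact fun _ => .refl
  | tail _ hcb ih =>
    intro hb
    rcases hcb with h | ⟨_, rfl⟩
    · exact (ih (hdom _ _ h)).tail h
    · exact absurd rfl hb

lemma exists_max_rel {r : ℕ → ℕ → Prop}
    (htr : ∀ a b c, r a b → r b c → r a c)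
    (hanti : ∀ a b, r a b → r b a → a = b)
    (s : Finset ℕ) :
    s.Nonempty → ∃ m ∈ s, ∀ w ∈ s, r m w → w = m := by
  classical
  induction s using Finset.induction_on with
  | empty => rintro ⟨x, hx⟩; exact absurd hx (Finset.notMem_empty x)
  | @insert a t ha ih =>
    intro _
    rcases t.eq_empty_or_nonempty with rfl | hne
    · exact ⟨a, Finset.mem_insert_self a _, fun w hw _ => by simpa using hw⟩
    · obtain ⟨m, hm, hmax⟩ := ih hne
      by_cases hra : r m a
      · refine ⟨a, Finset.mem_insert_self a t, ?_⟩
        intro w hw hraw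
        rcases Finset.mem_insert.1 hw with rfl | hw
        · rfl
        · have hwm : w = m := hmax w hw (htr _ _ _ hra hraw)
          subst hwm
          exact (hanti _ _ hraw hra).symm
      · refine ⟨m, Finset.mem_insert_of_mem hm, ?_⟩
        intro w hw hrmw
        rcases Finset.mem_insert.1 hw with rfl | hw
        · exact absurd hrmw hra
        · exact hmax w hw hrmw

lemma inv_update {D : MRDT T R O} (C : Config T R O D.State) (hC : InvC D C)
    (v : ℕ) (hv : C.N v = none) (σ' : D.State) (H' : R → Option ℕ)
    (vis' : Event T R O → Event T R O → Prop)
    (srcs : ℕ → Prop) (X : Finset (Event T R O))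
    (hsrc : ∀ s, srcs s → (C.N s).isSome)
    (hsub : ∀ s, srcs s → C.L s ⊆ X)
    (hX : ∀ e ∈ X, (∃ s, srcs s ∧ e ∈ C.L s) ∨ ∀ w, (C.N w).isSome → e ∉ C.L w) :
    InvC D (Config.mk (Function.update C.N v (some σ'))
      H' (Function.update C.L v X)
      (fun u w => C.E u w ∨ (srcs u ∧ w = v)) vis') := by
  obtain ⟨hfin, hedom, hmono, hacyc, hanc⟩ := hC
  set N' : ℕ → Option D.State := Function.update C.N v (some σ') with hN'def
  set L' : ℕ → Finset (Event T R O) := Function.update C.L v X with hL'def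
  set E' : ℕ → ℕ → Prop := fun u w => C.E u w ∨ (srcs u ∧ w = v) with hE'def
  have hne : ∀ w, (C.N w).isSome → w ≠ v := by
    rintro w hw rfl; rw [hv] at hw; simp at hw
  have hN' : ∀ w, (N' w).isSome ↔ (w = v ∨ (C.N w).isSome) := by
    intro w
    by_cases hwv : w = v
    · subst hwv; simp [N']
    · simp [N', Function.update_of_ne hwv, hwv]
  have hL' : ∀ w, w ≠ v → L' w = C.L w := by
    intro w hw; exact Function.update_of_ne hw _ _
  have hLv : L' v = X := Function.update_self _ _ _
  have hdom : ∀ a b, C.E a b → a ≠ v := fun a b hab => hne a (hedom _ _ hab).1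
  have lift : ∀ {a b : ℕ}, ReflTransGen C.E a b → ReflTransGen E' a b :=
    fun h => by
      induction h with
      | refl => exact .refl
      | tail _ hcb ih => exact ih.tail (Or.inl hcb)
  have fin' : (setOf fun u => (N' u).isSome).Finite := by
    refine (hfin.insert v).subset ?_
    intro u hu
    rcases (hN' u).1 hu with rfl | hu
    · exact Set.mem_insert _ _
    · exact Set.mem_insert_of_mem _ hu
  have edom' : ∀ u w, E' u w → (N' u).isSome ∧ (N' w).isSome := by
    rintro u w (h | ⟨hs, rfl⟩)
    · exact ⟨(hN' u).2 (Or.inr (hedom _ _ h).1), (hN' w).2 (Or.inr (hedom _ _ h).2)⟩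
    · exact ⟨(hN' u).2 (Or.inr (hsrc _ hs)), (hN' _).2 (Or.inl rfl)⟩
  have mono' : ∀ u w, E' u w → L' u ⊆ L' w := by
    rintro u w (h | ⟨hs, rfl⟩)
    · rw [hL' u (hdom _ _ h), hL' w (hne w (hedom _ _ h).2)]
      exact hmono _ _ h
    · rw [hL' u (hne u (hsrc _ hs)), hLv]
      exact hsub _ hs
  have acyc' : ∀ u w, E' u w → ¬ ReflTransGen E' w u := by
    rintro u w (h | ⟨hs, rfl⟩) hrt
    · exact hacyc _ _ h (rtg_avoid hdom hrt (hdom _ _ h))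
    · have hu : u ≠ w := hne u (hsrc _ hs)
      have hrt' := rtg_avoid hdom hrt hu
      rcases hrt'.cases_head with h' | ⟨c, hvc, _⟩
      · exact hu h'.symm
      · have h'' := (hedom _ _ hvc).1
        rw [hv] at h''; simp at h''
  have anc' : ∀ e w1 w2, (N' w1).isSome → (N' w2).isSome → e ∈ L' w1 → e ∈ L' w2 →
      ∃ u, (N' u).isSome ∧ ReflTransGen E' u w1 ∧ ReflTransGen E' u w2 ∧ e ∈ L' u := by
    have main : ∀ e w, (C.N w).isSome → e ∈ C.L w → e ∈ X →
        ∃ u, (N' u).isSome ∧ ReflTransGen E' u v ∧ ReflTransGen E' u w ∧ e ∈ L' u := by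
      intro e w hw hew heX
      rcases hX e heX with ⟨s, hs, hes⟩ | hno
      · obtain ⟨u, hu, hus, huw, heu⟩ := hanc e s w (hsrc _ hs) hw hes hew
        refine ⟨u, (hN' u).2 (Or.inr hu), ?_, lift huw, ?_⟩
        · exact (lift hus).tail (Or.inr ⟨hs, rfl⟩)
        · rwa [hL' u (hne u hu)]
      · exact absurd hew (hno w hw)
    intro e w1 w2 h1 h2 he1 he2
    by_cases hw1 : w1 = v
    · by_cases hw2 : w2 = v
      · refine ⟨v, (hN' v).2 (Or.inl rfl), ?_, ?_, ?_⟩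
        · rw [hw1]
        · rw [hw2]
        · rw [hLv]; rw [hw1, hLv] at he1; exact he1
      · rw [hL' w2 hw2] at he2
        rw [hw1, hLv] at he1
        have hw2s : (C.N w2).isSome := ((hN' w2).1 h2).resolve_left hw2
        obtain ⟨u, hu, huv, huw2, heu⟩ := main e w2 hw2s he2 he1
        exact ⟨u, hu, hw1 ▸ huv, huw2, heu⟩
    · rw [hL' w1 hw1] at he1
      have hw1s : (C.N w1).isSome := ((hN' w1).1 h1).resolve_left hw1
      by_cases hw2 : w2 = v
      · rw [hw2, hLv] at he2
        obtain ⟨u, hu, huv, huw1, heu⟩ := main e w1 hw1s he1 he2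
        exact ⟨u, hu, huw1, hw2 ▸ huv, heu⟩
      · rw [hL' w2 hw2] at he2
        have hw2s : (C.N w2).isSome := ((hN' w2).1 h2).resolve_left hw2
        obtain ⟨u, hu, huw1, huw2, heu⟩ := hanc e w1 w2 hw1s hw2s he1 he2
        exact ⟨u, (hN' u).2 (Or.inr hu), lift huw1, lift huw2,
          by rwa [hL' u (hne u hu)]⟩
  exact ⟨fin', edom', mono', acyc', anc'⟩

lemma inv_step {D : MRDT T R O} {C C' : Config T R O D.State}
    (hC : InvC D C) (h : Step D C C') : InvC D C' := by
  cases h with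
  | createBranch r r' vr v σ hr hσ hr' hv =>
    refine inv_update C hC v hv σ _ _ (fun u => u = vr) (C.L vr) ?_ ?_ ?_
    · rintro s rfl; rw [hσ]; simp
    · rintro s rfl; exact fun x hx => hx
    · exact fun e he => Or.inl ⟨vr, rfl, he⟩
  | applyOp t r o vr v σ hr hσ hv ht =>
    refine inv_update C hC v hv _ _ _ (fun u => u = vr) (insert (t, r, o) (C.L vr)) ?_ ?_ ?_
    · rintro s rfl; rw [hσ]; simp
    · rintro s rfl; exact Finset.subset_insert _ _
    · intro e he
      rcases Finset.mem_insert.1 he with rfl | he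
      · exact Or.inr (fun w hw hew => ht _ ⟨w, hw, hew⟩ rfl)
      · exact Or.inl ⟨vr, rfl, he⟩
  | mergeOp r1 r2 v1 v2 vt v σ1 σ2 σt h1 h2 hσ1 hσ2 hσt hlca hv =>
    refine inv_update C hC v hv _ _ _ (fun u => u = v1 ∨ u = v2) (C.L v1 ∪ C.L v2) ?_ ?_ ?_
    · rintro s (rfl | rfl)
      · rw [hσ1]; simp
      · rw [hσ2]; simp
    · rintro s (rfl | rfl)
      · exact Finset.subset_union_left
      · exact Finset.subset_union_right
    · intro e he
      rcases Finset.mem_union.1 he with he | he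
      · exact Or.inl ⟨v1, Or.inl rfl, he⟩
      · exact Or.inl ⟨v2, Or.inr rfl, he⟩
  | queryOp => exact hC

lemma inv_init (D : MRDT T R O) (r0 : R) : InvC D (initConfig D r0) := by
  refine ⟨?_, ?_, ?_, ?_, ?_⟩
  · refine (Set.finite_singleton 0).subset ?_
    intro u hu
    simp only [initConfig, Set.mem_setOf_eq] at hu
    simp only [Set.mem_singleton_iff]
    by_contra h
    have hu' : (if u = 0 then some D.init else none).isSome = true := hu
    simp [h] at hu'
  · rintro u w ⟨⟩
  · rintro u w ⟨⟩
  · rintro u w ⟨⟩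
  · intro e w1 w2 _ _ he1 _
    simp [initConfig] at he1

lemma inv_reachable {D : MRDT T R O} {C : Config T R O D.State}
    (hC : Reachable D C) : InvC D C := by
  obtain ⟨r0, h⟩ := hC
  induction h with
  | refl => exact inv_init D r0
  | tail _ hstep ih => exact inv_step ih hstep

end AuxProof

/-- in any reachable configuration, the union of the event sets of all
potential LCAs of two versions equals the intersection of the event sets of the
two versions. -/
theorem potential_lca_events (T R O : Type) [DecidableEq T] [DecidableEq R] [DecidableEq O]
    (D : MRDT T R O) (C : Config T R O D.State) (hC : Reachable D C)
    (v1 v2 : ℕ) (h1 : (C.N v1).isSome) (h2 : (C.N v2).isSome) :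
    {e : Event T R O | ∃ vt, isPotentialLCA (fun u => (C.N u).isSome) C.E v1 v2 vt ∧
        e ∈ C.L vt} =
      {e : Event T R O | e ∈ C.L v1 ∧ e ∈ C.L v2} := by
  obtain ⟨hfin, hedom, hmono, hacyc, hanc⟩ := inv_reachable hC
  ext e
  simp only [Set.mem_setOf_eq]
  constructor
  · rintro ⟨vt, ⟨hvt, hp1, hp2, -⟩, he⟩
    exact ⟨mono_rtg hmono hp1 he, mono_rtg hmono hp2 he⟩
  · rintro ⟨he1, he2⟩
    obtain ⟨u, hu, hu1, hu2, heu⟩ := hanc e v1 v2 h1 h2 he1 he2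
    set S : Set ℕ := {w | (C.N w).isSome ∧ Relation.ReflTransGen C.E u w ∧
      Relation.ReflTransGen C.E w v1 ∧ Relation.ReflTransGen C.E w v2} with hS
    have hSfin : S.Finite := hfin.subset (fun w hw => hw.1)
    obtain ⟨m, hm, hmax⟩ := exists_max_rel (r := Relation.ReflTransGen C.E)
      (fun a b c hab hbc => hab.trans hbc) (fun a b => rtg_antisymm hacyc)
      hSfin.toFinset ⟨u, hSfin.mem_toFinset.2 ⟨hu, .refl, hu1, hu2⟩⟩
    rw [Set.Finite.mem_toFinset] at hm
    refine ⟨m, ⟨hm.1, hm.2.2.1, hm.2.2.2, ?_⟩, mono_rtg hmono hm.2.1 heu⟩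
    rintro ⟨w, hw, hwne, hw1, hw2, hmw⟩
    exact hwne (hmax w (hSfin.mem_toFinset.2 ⟨hw, hm.2.1.trans hmw, hw1, hw2⟩) hmw)
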